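/- arXiv:2402.15668 — 2 statements merged into one kernel-verified Lean document; each statement's English description precedes it below -/
import Mathlib

section
/- In the Pivot assignment process, for every node u in the recursion tree, at most one edge of the recursion tree incident to u is not cut (an edge (u',u'') with u' the child is uncut only if u'' is a pivot and u' is assigned to u''; consequently each node has at most one uncut child edge, and if a node has an uncut child edge, then it is not a pivot and its parent edge is cut). -/
/-- Recursion tree of Pivot: a rooted tree given by a parent map (`parent root = root`,
`parent v ≠ v` for `v ≠ root`); the edge associated with a non-root node `c` is
`{c, parent c}`.  Pivots are assigned to themselves.  The edge of `c` is *uncut*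
iff `c` is a pivot and its parent is assigned to `c`.  Then every vertex is
incident to at most one uncut edge. -/
theorem stmt_7 {V : Type*} (root : V) (parent : V → V)
    (hroot : parent root = root) (hne : ∀ v, v ≠ root → parent v ≠ v)
    (Pivot : V → Prop) (assign : V → V)
    (hpivot : ∀ v, Pivot v → assign v = v)
    (Uncut : V → Prop)
    (hUncut : ∀ c, Uncut c ↔ c ≠ root ∧ Pivot c ∧ assign (parent c) = c) :
    ∀ u c₁ c₂ : V, Uncut c₁ → Uncut c₂ →
      (c₁ = u ∨ parent c₁ = u) → (c₂ = u ∨ parent c₂ = u) → c₁ = c₂ := by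
  intro u c₁ c₂ h1 h2 e1 e2
  obtain ⟨hr1, hp1, ha1⟩ := (hUncut c₁).mp h1
  obtain ⟨hr2, hp2, ha2⟩ := (hUncut c₂).mp h2
  rcases e1 with rfl | e1 <;> rcases e2 with e2 | e2
  · exact e2.symm
  · rw [e2, hpivot _ hp1] at ha2; exact ha2
  · rw [e1, ← e2, hpivot _ hp2] at ha1; exact ha1.symm
  · rw [e1] at ha1; rw [e2] at ha2; rw [ha1] at ha2; exact ha2
end

section
/- If a path P = (u_0,…,u_L) is dangerous at iteration t+1 but not at iteration t (where dangerous at t means π(u_{L-2}) ≤ t < π(u_{L-1}) and σ(u_L) > t, for L ≥ 2), then the prefix P' = (u_0,…,u_{L-1}) satisfies π(u_{L-3}) ≤ t < π(u_{L-2}) and σ(u_{L-1}) > t, i.e., P' is dangerous at t; moreover P' is not dangerous at t+1. -/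
/-- A path of length `M ≥ 2` is dangerous at iteration `t` if
`π (u (M-2)) ≤ t`, `π (u (M-1)) > t`, and `σ (u M) > t`. -/
def Dangerous {V : Type*} (σ π : V → ℕ) (u : ℕ → V) (M t : ℕ) : Prop :=
  π (u (M - 2)) ≤ t ∧ t < π (u (M - 1)) ∧ t < σ (u M)

/-- If an extended query path `P = (u 0, …, u L)` (with `L ≥ 3`, distinct
vertices, `π` injective) is dangerous at iteration `t + 1` but not at
iteration `t`, then its prefix `P' = (u 0, …, u (L-1))` is dangerous at
iteration `t` but not at iteration `t + 1`. -/
theorem stmt_15 {V : Type*} (σ π : V → ℕ) (hσπ : ∀ v, σ v ≤ π v)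
    (hπinj : Function.Injective π)
    (L : ℕ) (hL : 3 ≤ L) (u : ℕ → V)
    (hdistinct : ∀ i ≤ L, ∀ j ≤ L, u i = u j → i = j)
    (hEQ : (∀ i < L - 1, π (u i) ≤ σ (u (i + 1))) ∧ π (u (L - 2)) ≤ σ (u L))
    (t : ℕ)
    (h1 : Dangerous σ π u L (t + 1))
    (h2 : ¬ Dangerous σ π u L t) :
    Dangerous σ π u (L - 1) t ∧ ¬ Dangerous σ π u (L - 1) (t + 1) := by
  obtain ⟨hA, hB, hC⟩ := h1
  -- from not dangerous at t, π (u (L-2)) = t + 1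
  have heq : π (u (L - 2)) = t + 1 := by
    by_contra h
    exact h2 ⟨by omega, by omega, by omega⟩
  have h32 : L - 1 - 2 = L - 3 := by omega
  have h21 : L - 1 - 1 = L - 2 := by omega
  have hchain : π (u (L - 3)) ≤ σ (u (L - 2)) := by
    have := hEQ.1 (L - 3) (by omega)
    have : L - 3 + 1 = L - 2 := by omega
    have := hEQ.1 (L - 3) (by omega)
    rwa [show L - 3 + 1 = L - 2 by omega] at this
  have hσ2 : σ (u (L - 2)) ≤ π (u (L - 2)) := hσπ _
  have hne : π (u (L - 3)) ≠ π (u (L - 2)) := by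
    intro h
    have := hdistinct (L - 3) (by omega) (L - 2) (by omega) (hπinj h)
    omega
  have h23 : π (u (L - 3)) ≤ t := by omega
  have hσ1 : π (u (L - 2)) ≤ σ (u (L - 1)) := by
    have := hEQ.1 (L - 2) (by omega)
    rwa [show L - 2 + 1 = L - 1 by omega] at this
  constructor
  · exact ⟨by rw [h32]; exact h23, by rw [h21]; omega, by omega⟩
  · rintro ⟨-, hb, -⟩
    rw [h21] at hb
    omega
end
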